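/- arXiv:1909.10107 — 3 statements merged into one kernel-verified Lean document; each statement's English description precedes it below -/
import Mathlib

section
/- Let L1 and L2 be bounded linear operators on X = C(cl(Ω), ℝ^m). Assume that L1φ ≥ L2φ for every φ ∈ X₊, that L2 is a positive compact operator (L2 X₊ ⊆ X₊), and that the spectral radius r(L2) is positive. Then r(L1) ≥ r(L2). -/
/-!
Positivity of `L₂` together with `L₂ ≤ L₁` on the cone gives `0 ≤ L₂ⁿ φ ≤ L₁ⁿ φ` for every
`φ ≥ 0`. Writing an arbitrary `φ` as the difference of its coordinatewise positive and negative
parts, each of sup norm at most `‖φ‖`, and using that the sup norm is monotone on the cone, one gets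
`‖L₂ⁿ‖ ≤ 2 ‖L₁ⁿ‖`. Taking `n`-th roots, the factor `2 ^ (1 / n)` tends to `1`.
-/

open Filter Topology

lemma le_of_tendsto_rpow_inv_of_le_const_mul {a b : ℕ → ℝ} {r s C : ℝ} (hC : 0 < C)
    (ha : ∀ n, 0 ≤ a n) (hb : ∀ n, 0 ≤ b n) (hab : ∀ n, a n ≤ C * b n)
    (hr : Tendsto (fun n : ℕ => a n ^ (n : ℝ)⁻¹) atTop (𝓝 r))
    (hs : Tendsto (fun n : ℕ => b n ^ (n : ℝ)⁻¹) atTop (𝓝 s)) :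
    r ≤ s := by
  have hCroot : Tendsto (fun n : ℕ => C ^ (n : ℝ)⁻¹) atTop (𝓝 1) := by
    simpa [Function.comp_def] using ((Real.continuousAt_const_rpow hC.ne').tendsto.comp
      tendsto_inv_atTop_nhds_zero_nat)
  have hroot_le (n : ℕ) : a n ^ (n : ℝ)⁻¹ ≤ C ^ (n : ℝ)⁻¹ * b n ^ (n : ℝ)⁻¹ := by
    rw [← Real.mul_rpow hC.le (hb n)]
    exact Real.rpow_le_rpow (ha n) (hab n) (by positivity)
  simpa using le_of_tendsto_of_tendsto' hr (hCroot.mul hs) hroot_le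

lemma EuclideanSpace.norm_le_norm_of_abs_le {ι : Type*} [Fintype ι] {a b : EuclideanSpace ℝ ι}
    (h : ∀ i, |a i| ≤ |b i|) : ‖a‖ ≤ ‖b‖ := by
  rw [EuclideanSpace.norm_eq, EuclideanSpace.norm_eq]
  refine Real.sqrt_le_sqrt (Finset.sum_le_sum fun i _ => ?_)
  simpa only [Real.norm_eq_abs] using pow_le_pow_left₀ (abs_nonneg _) (h i) 2

namespace ContinuousMap

variable {K ι : Type*} [TopologicalSpace K]

def IsCoordNonneg (φ : C(K, EuclideanSpace ℝ ι)) : Prop := ∀ x i, 0 ≤ φ x i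

noncomputable def coordPosPart (φ : C(K, EuclideanSpace ℝ ι)) : C(K, EuclideanSpace ℝ ι) where
  toFun x := WithLp.toLp 2 fun i => max (φ x i) 0
  continuous_toFun := (PiLp.continuous_toLp 2 _).comp <| continuous_pi fun i =>
    ((EuclideanSpace.proj i).continuous.comp φ.continuous).max continuous_const

@[simp]
lemma coordPosPart_apply (φ : C(K, EuclideanSpace ℝ ι)) (x : K) (i : ι) :
    coordPosPart φ x i = max (φ x i) 0 := rfl

lemma isCoordNonneg_coordPosPart (φ : C(K, EuclideanSpace ℝ ι)) :
    IsCoordNonneg (coordPosPart φ) :=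
  fun _ _ => le_max_right _ _

variable [Fintype ι]

lemma coordPosPart_sub_coordPosPart_neg (φ : C(K, EuclideanSpace ℝ ι)) :
    coordPosPart φ - coordPosPart (-φ) = φ := by
  ext x i
  simp [max_zero_sub_max_neg_zero_eq_self]

variable [CompactSpace K]

lemma norm_coordPosPart_le (φ : C(K, EuclideanSpace ℝ ι)) : ‖coordPosPart φ‖ ≤ ‖φ‖ := by
  refine (norm_le _ (norm_nonneg φ)).2 fun x => ?_
  refine le_trans (EuclideanSpace.norm_le_norm_of_abs_le fun i => ?_) (φ.norm_coe_le_norm x)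
  rw [coordPosPart_apply, abs_of_nonneg (le_max_right _ _)]
  exact max_le (le_abs_self _) (abs_nonneg _)

lemma norm_le_norm_of_isCoordNonneg_of_le {φ ψ : C(K, EuclideanSpace ℝ ι)}
    (hφ : IsCoordNonneg φ) (hφψ : ∀ x i, φ x i ≤ ψ x i) : ‖φ‖ ≤ ‖ψ‖ := by
  refine (norm_le φ (norm_nonneg ψ)).2 fun x => ?_
  refine le_trans (EuclideanSpace.norm_le_norm_of_abs_le fun i => ?_) (ψ.norm_coe_le_norm x)
  rw [abs_of_nonneg (hφ x i), abs_of_nonneg ((hφ x i).trans (hφψ x i))]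
  exact hφψ x i

end ContinuousMap

namespace ContinuousLinearMap

open ContinuousMap

variable {K ι : Type*} [TopologicalSpace K] [Fintype ι]
  {A B : C(K, EuclideanSpace ℝ ι) →L[ℝ] C(K, EuclideanSpace ℝ ι)}

lemma apply_le_apply_of_isCoordNonneg (hA : ∀ φ, IsCoordNonneg φ → IsCoordNonneg (A φ))
    {φ ψ : C(K, EuclideanSpace ℝ ι)} (hφψ : ∀ x i, φ x i ≤ ψ x i) :
    ∀ x i, A φ x i ≤ A ψ x i := by
  have hdiff := hA (ψ - φ) fun x i => sub_nonneg.2 (hφψ x i)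
  intro x i
  simpa using hdiff x i

lemma isCoordNonneg_pow_apply (hA : ∀ φ, IsCoordNonneg φ → IsCoordNonneg (A φ)) (n : ℕ)
    {φ : C(K, EuclideanSpace ℝ ι)} (hφ : IsCoordNonneg φ) : IsCoordNonneg ((A ^ n) φ) := by
  induction n with
  | zero => exact hφ
  | succ n ih => rw [pow_succ']; exact hA _ ih

lemma pow_apply_le_pow_apply (hA : ∀ φ, IsCoordNonneg φ → IsCoordNonneg (A φ))
    (hAB : ∀ φ, IsCoordNonneg φ → ∀ x i, A φ x i ≤ B φ x i) (n : ℕ)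
    {φ : C(K, EuclideanSpace ℝ ι)} (hφ : IsCoordNonneg φ) :
    ∀ x i, (A ^ n) φ x i ≤ (B ^ n) φ x i := by
  induction n with
  | zero => exact fun _ _ => le_rfl
  | succ n ih =>
    have hBφ : IsCoordNonneg ((B ^ n) φ) := fun x i =>
      (isCoordNonneg_pow_apply hA n hφ x i).trans (ih x i)
    intro x i
    rw [pow_succ', pow_succ']
    exact (apply_le_apply_of_isCoordNonneg hA ih x i).trans (hAB _ hBφ x i)

lemma opNorm_le_two_mul_of_isCoordNonneg [CompactSpace K]
    (hA : ∀ φ, IsCoordNonneg φ → IsCoordNonneg (A φ))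
    (hAB : ∀ φ, IsCoordNonneg φ → ∀ x i, A φ x i ≤ B φ x i) : ‖A‖ ≤ 2 * ‖B‖ := by
  have hnorm {φ : C(K, EuclideanSpace ℝ ι)} (hφ : IsCoordNonneg φ) : ‖A φ‖ ≤ ‖B‖ * ‖φ‖ :=
    (norm_le_norm_of_isCoordNonneg_of_le (hA φ hφ) (hAB φ hφ)).trans (le_opNorm B φ)
  refine opNorm_le_bound _ (by positivity) fun φ => ?_
  calc ‖A φ‖ = ‖A (coordPosPart φ) - A (coordPosPart (-φ))‖ := by
        rw [← map_sub, coordPosPart_sub_coordPosPart_neg]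
    _ ≤ ‖B‖ * ‖coordPosPart φ‖ + ‖B‖ * ‖coordPosPart (-φ)‖ :=
        (norm_sub_le _ _).trans (add_le_add (hnorm (isCoordNonneg_coordPosPart φ))
          (hnorm (isCoordNonneg_coordPosPart (-φ))))
    _ ≤ ‖B‖ * ‖φ‖ + ‖B‖ * ‖-φ‖ := by
        gcongr <;> exact norm_coordPosPart_le _
    _ = 2 * ‖B‖ * ‖φ‖ := by rw [norm_neg]; ring

end ContinuousLinearMap

theorem stmt0_general {N m : ℕ}
    (Ω : Set (EuclideanSpace ℝ (Fin N))) [CompactSpace (closure Ω)]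
    (L1 L2 : C(closure Ω, EuclideanSpace ℝ (Fin m)) →L[ℝ]
      C(closure Ω, EuclideanSpace ℝ (Fin m)))
    (horder : ∀ φ : C(closure Ω, EuclideanSpace ℝ (Fin m)),
      (∀ x (i : Fin m), 0 ≤ φ x i) → ∀ x (i : Fin m), (L2 φ) x i ≤ (L1 φ) x i)
    (hpos : ∀ φ : C(closure Ω, EuclideanSpace ℝ (Fin m)),
      (∀ x (i : Fin m), 0 ≤ φ x i) → ∀ x (i : Fin m), 0 ≤ (L2 φ) x i)
    (r1 r2 : ℝ)
    (hr1 : Tendsto (fun n : ℕ => ‖L1 ^ n‖ ^ ((n : ℝ)⁻¹)) atTop (𝓝 r1))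
    (hr2 : Tendsto (fun n : ℕ => ‖L2 ^ n‖ ^ ((n : ℝ)⁻¹)) atTop (𝓝 r2)) :
    r2 ≤ r1 := by
  have hpow (n : ℕ) : ‖L2 ^ n‖ ≤ 2 * ‖L1 ^ n‖ :=
    ContinuousLinearMap.opNorm_le_two_mul_of_isCoordNonneg
      (fun _ => ContinuousLinearMap.isCoordNonneg_pow_apply hpos n)
      (fun _ hφ => ContinuousLinearMap.pow_apply_le_pow_apply hpos horder n hφ)
  exact le_of_tendsto_rpow_inv_of_le_const_mul two_pos
    (fun _ => ContinuousLinearMap.opNorm_nonneg _) (fun _ => ContinuousLinearMap.opNorm_nonneg _)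
    hpow hr2 hr1

/-- Let `L1` and `L2` be bounded linear operators on
`X = C(cl(Ω), ℝ^m)` (with `Ω` a nonempty bounded open subset of `ℝ^N`, so that
`cl(Ω)` is compact and `X` carries the supremum norm).  Assume `L1 φ ≥ L2 φ`
for every `φ ∈ X₊`, that `L2` is a positive compact operator, and that the
spectral radius `r(L2) = lim ‖L2ⁿ‖^{1/n}` is positive.  Then `r(L1) ≥ r(L2)`. -/
theorem stmt0 {N m : ℕ} (hN : 1 ≤ N) (hm : 1 ≤ m)
    (Ω : Set (EuclideanSpace ℝ (Fin N))) (hΩne : Ω.Nonempty) (hΩopen : IsOpen Ω)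
    (hΩbdd : Bornology.IsBounded Ω) [CompactSpace (closure Ω)]
    (L1 L2 : C(closure Ω, EuclideanSpace ℝ (Fin m)) →L[ℝ]
      C(closure Ω, EuclideanSpace ℝ (Fin m)))
    (horder : ∀ φ : C(closure Ω, EuclideanSpace ℝ (Fin m)),
      (∀ x (i : Fin m), 0 ≤ φ x i) → ∀ x (i : Fin m), (L2 φ) x i ≤ (L1 φ) x i)
    (hpos : ∀ φ : C(closure Ω, EuclideanSpace ℝ (Fin m)),
      (∀ x (i : Fin m), 0 ≤ φ x i) → ∀ x (i : Fin m), 0 ≤ (L2 φ) x i)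
    (hcompact : IsCompactOperator L2)
    (r1 r2 : ℝ)
    (hr1 : Tendsto (fun n : ℕ => ‖L1 ^ n‖ ^ ((n : ℝ)⁻¹)) atTop (𝓝 r1))
    (hr2 : Tendsto (fun n : ℕ => ‖L2 ^ n‖ ^ ((n : ℝ)⁻¹)) atTop (𝓝 r2))
    (hr2pos : 0 < r2) :
    r2 ≤ r1 :=
  stmt0_general Ω L1 L2 horder hpos r1 r2 hr1 hr2
end

section
/- Let Ω ⊆ ℝ^N be a nonempty bounded open set and let ν₁,…,ν_m, γ₁,…,γ_m, β₁,…,β_m, λ, b be continuous strictly positive real-valued functions on cl(Ω). Let α ∈ [0,1], h(N) := N^{−α}, and S̃ := (∫_Ω λ dx)/(∫_Ω b dx). Define m×m real matrices V̌ and F̌ by: V̌_{ii} = ∫_Ω (ν_i + γ_i) dx for 1 ≤ i ≤ m; V̌_{i,i−1} = −∫_Ω ν_{i−1} dx for 2 ≤ i ≤ m; V̌_{ij} = 0 otherwise; F̌_{1j} = S̃ h(S̃) ∫_Ω β_j dx for 1 ≤ j ≤ m; and F̌_{ij} = 0 for i ≥ 2. Then V̌ is invertible, the number σ := ( Σ_{j=1}^m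 (∫_Ω β_j dx · Π_{k=1}^{j−1} ∫_Ω ν_k dx) / Π_{k=1}^{j} ∫_Ω (ν_k + γ_k) dx ) · S̃ h(S̃) is positive, σ is the unique positive eigenvalue of V̌⁻¹F̌, and the spectral radius r(V̌⁻¹F̌) equals σ. -/
open MeasureTheory

/-- The spectral radius of a real square matrix: the maximum modulus of the
complex roots of its characteristic polynomial (expressed as an `sSup`). -/
noncomputable def matSpecRad {m : ℕ} (A : Matrix (Fin m) (Fin m) ℝ) : ℝ :=
  sSup {t : ℝ | ∃ μ : ℂ, ((A.map Complex.ofReal).charpoly).IsRoot μ ∧ t = ‖μ‖}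

/-!
`V̌` is lower bidiagonal with positive diagonal, so it is invertible, and since `F̌` has a single
nonzero row, `V̌⁻¹ F̌ = w fᵀ` is of rank one, where `w` is the first column of `V̌⁻¹` (obtained by
forward substitution) and `f` is the first row of `F̌`. The characteristic polynomial of a rank-one
matrix `w fᵀ` is `X ^ (m - 1) * (X - w ⬝ᵥ f)`, and `w ⬝ᵥ f` is exactly `σ`, so `σ` is the only
nonzero eigenvalue.
-/

open Matrix Finset

theorem setIntegral_pos_of_continuousOn_closure {X : Type*} [TopologicalSpace X] [T2Space X]
    [MeasurableSpace X] [OpensMeasurableSpace X] {μ : Measure X} [IsFiniteMeasureOnCompacts μ]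
    [μ.IsOpenPosMeasure] {Ω : Set X} (hΩ : IsOpen Ω) (hne : Ω.Nonempty)
    (hK : IsCompact (closure Ω)) {f : X → ℝ} (hfc : ContinuousOn f (closure Ω))
    (hfp : ∀ x ∈ Ω, 0 < f x) : 0 < ∫ x in Ω, f x ∂μ := by
  have hint : IntegrableOn f Ω μ := (hfc.integrableOn_compact hK).mono_set subset_closure
  have hnn : 0 ≤ᵐ[μ.restrict Ω] f :=
    (ae_restrict_iff' hΩ.measurableSet).2 (Filter.Eventually.of_forall fun x hx => (hfp x hx).le)
  rw [setIntegral_pos_iff_support_of_nonneg_ae hnn hint]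
  exact (hΩ.measure_pos μ hne).trans_le
    (measure_mono fun x hx => ⟨(hfp x hx).ne', hx⟩)

section LowerBidiagonal

variable {K : Type*} {m : ℕ}

def lowerBidiagonal [Ring K] (d n : ℕ → K) : Matrix (Fin m) (Fin m) K :=
  of fun i j => if i = j then d i else if (j : ℕ) + 1 = i then -n j else 0

/-- The first column of the inverse of `lowerBidiagonal d n`. -/
def lowerBidiagonalInvCol [Field K] (d n : ℕ → K) (i : ℕ) : K :=
  (∏ k ∈ range i, n k) / ∏ k ∈ range (i + 1), d k

theorem det_lowerBidiagonal [CommRing K] (d n : ℕ → K) :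
    (lowerBidiagonal d n : Matrix (Fin m) (Fin m) K).det = ∏ i : Fin m, d i := by
  rw [det_of_isLowerTriangular _ fun i j (hij : i < j) => ?_]
  · simp [lowerBidiagonal]
  · simp [lowerBidiagonal, hij.ne, show (j : ℕ) + 1 ≠ i by omega]

theorem lowerBidiagonalInvCol_succ [Field K] {d : ℕ → K} (n : ℕ → K) {t : ℕ}
    (hd : ∀ k ≤ t + 1, d k ≠ 0) :
    d (t + 1) * lowerBidiagonalInvCol d n (t + 1) = n t * lowerBidiagonalInvCol d n t := by
  have hprod : ∏ k ∈ range (t + 1), d k ≠ 0 :=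
    prod_ne_zero_iff.2 fun k hk => hd k (by simp at hk; omega)
  simp only [lowerBidiagonalInvCol, prod_range_succ _ (t + 1), prod_range_succ n t]
  field_simp [hd (t + 1) le_rfl]

theorem lowerBidiagonal_mulVec_invCol [Field K] {d : ℕ → K} (n : ℕ → K)
    (hd : ∀ k < m, d k ≠ 0) :
    (lowerBidiagonal d n : Matrix (Fin m) (Fin m) K) *ᵥ (fun i => lowerBidiagonalInvCol d n i) =
      fun i : Fin m => if (i : ℕ) = 0 then (1 : K) else 0 := by
  ext i
  have hsplit : ∀ k : Fin m, lowerBidiagonal d n i k * lowerBidiagonalInvCol d n k =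
      (if i = k then d i * lowerBidiagonalInvCol d n i else 0) +
        (if (k : ℕ) + 1 = i then -(n k * lowerBidiagonalInvCol d n k) else 0) := by
    intro k
    by_cases h : i = k
    · subst h; simp [lowerBidiagonal]
    · by_cases h' : (k : ℕ) + 1 = i <;> simp [lowerBidiagonal, h, h']
  simp only [mulVec, dotProduct, hsplit, sum_add_distrib, sum_ite_eq, mem_univ, if_true]
  obtain ⟨i, hi⟩ := i
  cases i with
  | zero =>
    simp [lowerBidiagonalInvCol, hd 0 hi]
  | succ t =>
    rw [sum_eq_single (⟨t, by omega⟩ : Fin m) (fun k _ hk => if_neg fun h => hk (Fin.ext (by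
      simp at h ⊢; omega))) (by simp)]
    simp only [if_true, if_false, Nat.add_one_ne_zero]
    rw [lowerBidiagonalInvCol_succ n fun k (hk : k ≤ t + 1) => hd k (by omega), add_neg_cancel]

theorem det_lowerBidiagonal_ne_zero [Field K] {d : ℕ → K} (n : ℕ → K)
    (hd : ∀ k < m, d k ≠ 0) :
    (lowerBidiagonal d n : Matrix (Fin m) (Fin m) K).det ≠ 0 := by
  rw [det_lowerBidiagonal]
  exact prod_ne_zero_iff.2 fun i _ => hd i i.isLt

theorem inv_lowerBidiagonal_mul_vecMulVec [Field K] {d : ℕ → K} (n : ℕ → K)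
    (hd : ∀ k < m, d k ≠ 0) (f : Fin m → K) :
    (lowerBidiagonal d n : Matrix (Fin m) (Fin m) K)⁻¹ *
        vecMulVec (fun i : Fin m => if (i : ℕ) = 0 then (1 : K) else 0) f =
      vecMulVec (fun i : Fin m => lowerBidiagonalInvCol d n i) f := by
  rw [← lowerBidiagonal_mulVec_invCol n hd, ← mul_vecMulVec,
    nonsing_inv_mul_cancel_left _ _ (isUnit_iff_ne_zero.2 (det_lowerBidiagonal_ne_zero n hd))]

theorem lowerBidiagonalInvCol_pos [Field K] [LinearOrder K] [IsStrictOrderedRing K]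
    {d n : ℕ → K} {i : ℕ} (hd : ∀ k ≤ i, 0 < d k) (hn : ∀ k < i, 0 < n k) :
    0 < lowerBidiagonalInvCol d n i :=
  div_pos (prod_pos fun k hk => hn k (mem_range.1 hk))
    (prod_pos fun k hk => hd k (Nat.lt_succ_iff.1 (mem_range.1 hk)))

end LowerBidiagonal

theorem isRoot_charpoly_vecMulVec_iff {K ι : Type*} [Field K] [Fintype ι] [DecidableEq ι]
    [Nonempty ι] (u v : ι → K) {z : K} (hz : z ≠ 0) :
    (vecMulVec u v).charpoly.IsRoot z ↔ z = u ⬝ᵥ v := by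
  obtain ⟨k, hk⟩ : ∃ k, Fintype.card ι = k + 1 := Nat.exists_eq_add_one.2 Fintype.card_pos
  have hfactor : z ^ (k + 1) - (u ⬝ᵥ v) * z ^ k = z ^ k * (z - u ⬝ᵥ v) := by ring
  simp [charpoly_vecMulVec, hk, hfactor, hz, sub_eq_zero]

theorem isRoot_charpoly_map_ofReal_vecMulVec_iff {ι : Type*} [Fintype ι] [DecidableEq ι]
    [Nonempty ι] (u v : ι → ℝ) {z : ℂ} (hz : z ≠ 0) :
    ((vecMulVec u v).map Complex.ofReal).charpoly.IsRoot z ↔ z = (u ⬝ᵥ v : ℝ) := by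
  have hmap : (vecMulVec u v).map Complex.ofReal =
      vecMulVec (fun i => (u i : ℂ)) (fun j => (v j : ℂ)) := by
    ext i j; simp [vecMulVec_apply]
  rw [hmap, isRoot_charpoly_vecMulVec_iff _ _ hz]
  push_cast [dotProduct]
  rfl

theorem matSpecRad_eq_of_isRoot_iff {m : ℕ} {A : Matrix (Fin m) (Fin m) ℝ} {s : ℝ} (hs : 0 < s)
    (hroot : ∀ z : ℂ, z ≠ 0 → ((A.map Complex.ofReal).charpoly.IsRoot z ↔ z = s)) :
    matSpecRad A = s := by
  have hs' : (s : ℂ) ≠ 0 := Complex.ofReal_ne_zero.2 hs.ne'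
  refine IsGreatest.csSup_eq ⟨⟨s, (hroot s hs').2 rfl, by simp [abs_of_pos hs]⟩, ?_⟩
  rintro t ⟨μ, hμ, rfl⟩
  by_cases h0 : μ = 0
  · simpa [h0] using hs.le
  · simp [(hroot μ h0).1 hμ, abs_of_pos hs]

theorem stmt5_general {N m : ℕ} (hm : 1 ≤ m)
    (Ω : Set (EuclideanSpace ℝ (Fin N))) (hΩne : Ω.Nonempty) (hΩopen : IsOpen Ω)
    (hΩbdd : Bornology.IsBounded Ω)
    (ν γ β : ℕ → EuclideanSpace ℝ (Fin N) → ℝ)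
    (lam b : EuclideanSpace ℝ (Fin N) → ℝ)
    (hνc : ∀ i < m, ContinuousOn (ν i) (closure Ω))
    (hνp : ∀ i < m, ∀ x ∈ closure Ω, 0 < ν i x)
    (hγc : ∀ i < m, ContinuousOn (γ i) (closure Ω))
    (hγp : ∀ i < m, ∀ x ∈ closure Ω, 0 < γ i x)
    (hβc : ∀ i < m, ContinuousOn (β i) (closure Ω))
    (hβp : ∀ i < m, ∀ x ∈ closure Ω, 0 < β i x)
    (hlamc : ContinuousOn lam (closure Ω)) (hlamp : ∀ x ∈ closure Ω, 0 < lam x)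
    (hbc : ContinuousOn b (closure Ω)) (hbp : ∀ x ∈ closure Ω, 0 < b x)
    (α : ℝ)
    (S : ℝ) (hS : S = (∫ x in Ω, lam x) / (∫ x in Ω, b x))
    (Vc Fc : Matrix (Fin m) (Fin m) ℝ)
    (hVc : ∀ i j : Fin m, Vc i j =
      if i = j then ∫ x in Ω, (ν i x + γ i x)
      else if (j : ℕ) + 1 = (i : ℕ) then -∫ x in Ω, ν j x
      else 0)
    (hFc : ∀ i j : Fin m, Fc i j =
      if (i : ℕ) = 0 then S * S ^ (-α) * ∫ x in Ω, β j x else 0)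
    (σ : ℝ)
    (hσ : σ = (∑ j : Fin m,
        ((∫ x in Ω, β j x) * ∏ k ∈ Finset.range j, ∫ x in Ω, ν k x) /
          ∏ k ∈ Finset.range ((j : ℕ) + 1), ∫ x in Ω, (ν k x + γ k x)) *
      (S * S ^ (-α))) :
    Vc.det ≠ 0 ∧ 0 < σ ∧
    (((Vc⁻¹ * Fc).map Complex.ofReal).charpoly).IsRoot (σ : ℂ) ∧
    (∀ μ : ℝ, 0 < μ →
      (((Vc⁻¹ * Fc).map Complex.ofReal).charpoly).IsRoot (μ : ℂ) → μ = σ) ∧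
    matSpecRad (Vc⁻¹ * Fc) = σ := by
  have hpos : ∀ f : EuclideanSpace ℝ (Fin N) → ℝ, ContinuousOn f (closure Ω) →
      (∀ x ∈ closure Ω, 0 < f x) → 0 < ∫ x in Ω, f x := fun f hfc hfp =>
    setIntegral_pos_of_continuousOn_closure hΩopen hΩne hΩbdd.isCompact_closure hfc
      fun x hx => hfp x (subset_closure hx)
  set d : ℕ → ℝ := fun k => ∫ x in Ω, (ν k x + γ k x)
  set n : ℕ → ℝ := fun k => ∫ x in Ω, ν k x
  have hd : ∀ k < m, 0 < d k := fun k hk =>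
    hpos _ ((hνc k hk).add (hγc k hk)) fun x hx => add_pos (hνp k hk x hx) (hγp k hk x hx)
  have hc : 0 < S * S ^ (-α) := by
    have hS : 0 < S := hS ▸ div_pos (hpos _ hlamc hlamp) (hpos _ hbc hbp)
    positivity
  set w : Fin m → ℝ := fun i => lowerBidiagonalInvCol d n i
  set f : Fin m → ℝ := fun j => S * S ^ (-α) * ∫ x in Ω, β j x
  have hV : Vc = lowerBidiagonal d n := by ext i j; exact hVc i j
  have hF : Fc = vecMulVec (fun i : Fin m => if (i : ℕ) = 0 then 1 else 0) f := by
    ext i j; simp [hFc, vecMulVec_apply, f]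
  have hW : Vc⁻¹ * Fc = vecMulVec w f := by
    rw [hV, hF, inv_lowerBidiagonal_mul_vecMulVec n fun k hk => (hd k hk).ne']
  have hσw : σ = w ⬝ᵥ f := by
    rw [hσ, sum_mul]
    refine sum_congr rfl fun j _ => ?_
    simp only [w, f, lowerBidiagonalInvCol]
    ring
  have : Nonempty (Fin m) := ⟨⟨0, hm⟩⟩
  have hσpos : 0 < σ := by
    refine hσw ▸ sum_pos (fun j _ => mul_pos ?_ ?_) univ_nonempty
    · exact lowerBidiagonalInvCol_pos (fun k hk => hd k (by omega))
        fun k hk => hpos _ (hνc k (by omega)) (hνp k (by omega))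
    · exact mul_pos hc (hpos _ (hβc j j.isLt) (hβp j j.isLt))
  have hroot : ∀ z : ℂ, z ≠ 0 →
      (((Vc⁻¹ * Fc).map Complex.ofReal).charpoly.IsRoot z ↔ z = σ) := fun z hz => by
    rw [hW, isRoot_charpoly_map_ofReal_vecMulVec_iff w f hz, hσw]
  exact ⟨hV ▸ det_lowerBidiagonal_ne_zero n fun k hk => (hd k hk).ne', hσpos,
    (hroot σ (by exact_mod_cast hσpos.ne')).2 rfl,
    fun μ hμ h => by exact_mod_cast (hroot μ (by exact_mod_cast hμ.ne')).1 h,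
    matSpecRad_eq_of_isRoot_iff hσpos hroot⟩

/-- For the averaged next generation matrices `V̌`, `F̌` of the
staged progression model (0-based indices: Lean index `i` corresponds to math
index `i+1`), `V̌` is invertible, the number `σ` is positive, `σ` is the unique
positive eigenvalue of `V̌⁻¹ F̌`, and `r(V̌⁻¹ F̌) = σ`.  Here
`S̃ = (∫_Ω λ)/(∫_Ω b)` and `h(S̃) = S̃^{−α}`. -/
theorem stmt5 {N m : ℕ} (hN : 1 ≤ N) (hm : 1 ≤ m)
    (Ω : Set (EuclideanSpace ℝ (Fin N))) (hΩne : Ω.Nonempty) (hΩopen : IsOpen Ω)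
    (hΩbdd : Bornology.IsBounded Ω)
    (ν γ β : ℕ → EuclideanSpace ℝ (Fin N) → ℝ)
    (lam b : EuclideanSpace ℝ (Fin N) → ℝ)
    (hνc : ∀ i < m, ContinuousOn (ν i) (closure Ω))
    (hνp : ∀ i < m, ∀ x ∈ closure Ω, 0 < ν i x)
    (hγc : ∀ i < m, ContinuousOn (γ i) (closure Ω))
    (hγp : ∀ i < m, ∀ x ∈ closure Ω, 0 < γ i x)
    (hβc : ∀ i < m, ContinuousOn (β i) (closure Ω))
    (hβp : ∀ i < m, ∀ x ∈ closure Ω, 0 < β i x)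
    (hlamc : ContinuousOn lam (closure Ω)) (hlamp : ∀ x ∈ closure Ω, 0 < lam x)
    (hbc : ContinuousOn b (closure Ω)) (hbp : ∀ x ∈ closure Ω, 0 < b x)
    (α : ℝ) (hα : α ∈ Set.Icc (0 : ℝ) 1)
    (S : ℝ) (hS : S = (∫ x in Ω, lam x) / (∫ x in Ω, b x))
    (Vc Fc : Matrix (Fin m) (Fin m) ℝ)
    (hVc : ∀ i j : Fin m, Vc i j =
      if i = j then ∫ x in Ω, (ν i x + γ i x)
      else if (j : ℕ) + 1 = (i : ℕ) then -∫ x in Ω, ν j x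
      else 0)
    (hFc : ∀ i j : Fin m, Fc i j =
      if (i : ℕ) = 0 then S * S ^ (-α) * ∫ x in Ω, β j x else 0)
    (σ : ℝ)
    (hσ : σ = (∑ j : Fin m,
        ((∫ x in Ω, β j x) * ∏ k ∈ Finset.range j, ∫ x in Ω, ν k x) /
          ∏ k ∈ Finset.range ((j : ℕ) + 1), ∫ x in Ω, (ν k x + γ k x)) *
      (S * S ^ (-α))) :
    Vc.det ≠ 0 ∧ 0 < σ ∧
    (((Vc⁻¹ * Fc).map Complex.ofReal).charpoly).IsRoot (σ : ℂ) ∧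
    (∀ μ : ℝ, 0 < μ →
      (((Vc⁻¹ * Fc).map Complex.ofReal).charpoly).IsRoot (μ : ℂ) → μ = σ) ∧
    matSpecRad (Vc⁻¹ * Fc) = σ :=
  stmt5_general hm Ω hΩne hΩopen hΩbdd ν γ β lam b hνc hνp hγc hγp hβc hβp hlamc hlamp hbc hbp α S
    hS Vc Fc hVc hFc σ hσ
end

section
/- Let P and Q be m×m real matrices such that −P has nonnegative off-diagonal entries (i.e., −P is cooperative), Q has nonnegative entries and Q is not the zero matrix, and −P + aQ is irreducible for every a > 0. Define δ̂(M) := max{Re μ : μ ∈ ℂ is an eigenvalue of M} for a square real matrix M. Then the function a ↦ δ̂(−P + aQ) is strictly increasing on (0,∞); that is, for any 0 < a₂ < a₁ one has δ̂(−P + a₂Q) < δ̂(−P + a₁Q). -/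
/-!
For `a > 0`, adding a multiple of the identity to `-P + aQ` gives a nonnegative matrix that is
irreducible in the cut sense, so by Perron–Frobenius it has a positive eigenvector. We get it by
maximising the Collatz–Wielandt function `x ↦ minᵢ (Bx)ᵢ / xᵢ` over the compact image of the
simplex under `(1 + B)^(m-1)`, a matrix sending every nonzero `x ≥ 0` to a positive vector.
A cooperative matrix `A` with `A x = r x`, `x > 0`, has spectral bound exactly `r`: for
`(A + c)v = (μ + c)v` with `A + c ≥ 0`, comparing `|v|` with `x` at the index where `|vᵢ| / xᵢ`
is largest gives `|μ + c| ≤ r + c`. Finally, pairing a positive right eigenvector `x` of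
`-P + a₂Q` with a positive left eigenvector `y` of `-P + a₁Q` gives
`(r₁ - r₂) ⟪y, x⟫ = (a₁ - a₂) ⟪y, Q x⟫ > 0`.
-/

/-- The spectral bound of a real square matrix: the maximum of the real parts
of the complex roots of its characteristic polynomial (as an `sSup`). -/
noncomputable def spectralBound {m : ℕ} (A : Matrix (Fin m) (Fin m) ℝ) : ℝ :=
  sSup {t : ℝ | ∃ μ : ℂ, ((A.map Complex.ofReal).charpoly).IsRoot μ ∧ t = μ.re}

open Matrix Finset

namespace Matrix

variable {n : Type*} [Fintype n]

/-- Unlike `Matrix.IsIrreducible`, this imposes no sign condition, so it applies to cooperative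
matrices as they are. -/
def IsCutIrreducible (A : Matrix n n ℝ) : Prop :=
  ∀ s : Finset n, s.Nonempty → s ≠ univ → ∃ i ∈ s, ∃ j ∉ s, A i j ≠ 0

namespace IsCutIrreducible

variable {A B : Matrix n n ℝ}

theorem of_offDiag_eq (hA : A.IsCutIrreducible) (hAB : ∀ i j, i ≠ j → A i j = B i j) :
    B.IsCutIrreducible := by
  intro s hs hsu
  obtain ⟨i, hi, j, hj, hij⟩ := hA s hs hsu
  exact ⟨i, hi, j, hj, hAB i j (ne_of_mem_of_not_mem hi hj) ▸ hij⟩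

theorem transpose [DecidableEq n] (hA : A.IsCutIrreducible) : Aᵀ.IsCutIrreducible := by
  intro s hs hsu
  obtain ⟨i, hi, j, hj, hij⟩ :=
    hA sᶜ (compl_ne_univ_iff_nonempty sᶜ |>.mp (by simpa using hsu))
      ((compl_ne_univ_iff_nonempty s).mpr hs)
  exact ⟨j, notMem_compl.mp hj, i, mem_compl.mp hi, hij⟩

end IsCutIrreducible

noncomputable def posSupport (x : n → ℝ) : Finset n := {i | 0 < x i}

@[simp] theorem mem_posSupport {x : n → ℝ} {i : n} : i ∈ posSupport x ↔ 0 < x i := by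
  simp [posSupport]

theorem mulVec_nonneg_of_nonneg {B : Matrix n n ℝ} {x : n → ℝ} (hB : ∀ i j, 0 ≤ B i j)
    (hx : 0 ≤ x) : 0 ≤ B *ᵥ x :=
  fun i => dotProduct_nonneg_of_nonneg (hB i) hx

section CollatzWielandt

variable [Nonempty n] (B : Matrix n n ℝ)

noncomputable def collatzWielandt (x : n → ℝ) : ℝ :=
  univ.inf' univ_nonempty fun i => (B *ᵥ x) i / x i

variable {B} {x : n → ℝ} {t : ℝ}

theorem le_collatzWielandt_iff (hx : ∀ i, 0 < x i) :
    t ≤ B.collatzWielandt x ↔ t • x ≤ B *ᵥ x := by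
  simp only [collatzWielandt, le_inf'_iff, mem_univ, true_implies, Pi.le_def, Pi.smul_apply,
    smul_eq_mul, le_div_iff₀ (hx _)]

theorem lt_collatzWielandt_iff (hx : ∀ i, 0 < x i) :
    t < B.collatzWielandt x ↔ ∀ i, t * x i < (B *ᵥ x) i := by
  simp only [collatzWielandt, lt_inf'_iff, mem_univ, true_implies, lt_div_iff₀ (hx _)]

theorem collatzWielandt_smul {c : ℝ} (hc : c ≠ 0) (x : n → ℝ) :
    B.collatzWielandt (c • x) = B.collatzWielandt x := by
  simp only [collatzWielandt, mulVec_smul, Pi.smul_apply, smul_eq_mul, mul_div_mul_left _ _ hc]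

theorem continuousOn_collatzWielandt : ContinuousOn B.collatzWielandt {x | ∀ i, x i ≠ 0} :=
  ContinuousOn.finset_inf'_apply _ fun i _ =>
    ((continuous_apply i).comp (continuous_const.matrix_mulVec continuous_id)).continuousOn.div
      (continuous_apply i).continuousOn fun _ hx => hx i

theorem collatzWielandt_le_collatzWielandt_mulVec {T : Matrix n n ℝ}
    (hT : ∀ z, 0 ≤ z → 0 ≤ T *ᵥ z) (hTB : Commute T B) (hx : ∀ i, 0 < x i)
    (hTx : ∀ i, 0 < (T *ᵥ x) i) : B.collatzWielandt x ≤ B.collatzWielandt (T *ᵥ x) := by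
  rw [le_collatzWielandt_iff hTx, ← mulVec_smul, mulVec_mulVec, ← hTB.eq, ← mulVec_mulVec,
    ← sub_nonneg, ← mulVec_sub]
  exact hT _ (sub_nonneg.mpr ((le_collatzWielandt_iff hx).mp le_rfl))

end CollatzWielandt

theorem norm_le_of_mulVec_eq_smul {B : Matrix n n ℝ} (hB : ∀ i j, 0 ≤ B i j) {x : n → ℝ}
    (hx : ∀ i, 0 < x i) {r : ℝ} (hBx : B *ᵥ x = r • x) {μ : ℂ} {v : n → ℂ} (hv : v ≠ 0)
    (hBv : B.map (↑) *ᵥ v = μ • v) : ‖μ‖ ≤ r := by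
  obtain ⟨j, hj⟩ := Function.ne_iff.mp hv
  obtain ⟨i, -, hi⟩ := exists_max_image univ (fun i => ‖v i‖ / x i) ⟨j, mem_univ j⟩
  set t := ‖v i‖ / x i
  have hvt : ∀ j, ‖v j‖ ≤ t * x j := fun j => (div_le_iff₀ (hx j)).mp (hi j (mem_univ j))
  have hvi : 0 < ‖v i‖ := (div_pos_iff_of_pos_right (hx i)).mp
    ((div_pos (norm_pos_iff.mpr hj) (hx j)).trans_le (hi j (mem_univ j)))
  refine le_of_mul_le_mul_right ?_ hvi
  calc ‖μ‖ * ‖v i‖ = ‖∑ j, (B i j : ℂ) * v j‖ := by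
        rw [← norm_mul, ← smul_eq_mul, ← Pi.smul_apply, ← hBv]; rfl
    _ ≤ ∑ j, B i j * ‖v j‖ := (norm_sum_le _ _).trans_eq <| sum_congr rfl fun j _ => by
        rw [norm_mul, Complex.norm_real, Real.norm_of_nonneg (hB i j)]
    _ ≤ ∑ j, B i j * (t * x j) :=
        sum_le_sum fun j _ => mul_le_mul_of_nonneg_left (hvt j) (hB i j)
    _ = t * (B *ᵥ x) i := by
        simp only [mulVec, dotProduct, mul_sum]
        exact sum_congr rfl fun j _ => by ring
    _ = r * ‖v i‖ := by
        rw [hBx, Pi.smul_apply, smul_eq_mul, mul_left_comm, div_mul_cancel₀ _ (hx i).ne']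

theorem dotProduct_mulVec_pos {D : Matrix n n ℝ} (hD : ∀ i j, 0 ≤ D i j) (hD0 : D ≠ 0)
    {x y : n → ℝ} (hx : ∀ i, 0 < x i) (hy : ∀ i, 0 < y i) : 0 < y ⬝ᵥ D *ᵥ x := by
  obtain ⟨i, j, hij⟩ : ∃ i j, D i j ≠ 0 := by
    by_contra! h
    exact hD0 (ext h)
  have hDx : 0 ≤ D *ᵥ x := fun k => dotProduct_nonneg_of_nonneg (hD k) fun l => (hx l).le
  calc 0 < y i * (D i j * x j) := mul_pos (hy i) (mul_pos ((hD i j).lt_of_ne' hij) (hx j))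
    _ ≤ y i * (D *ᵥ x) i :=
      mul_le_mul_of_nonneg_left (single_le_sum (f := fun l => D i l * x l)
        (fun l _ => mul_nonneg (hD i l) (hx l).le) (mem_univ j)) (hy i).le
    _ ≤ y ⬝ᵥ D *ᵥ x := single_le_sum (f := fun k => y k * (D *ᵥ x) k)
        (fun k _ => mul_nonneg (hy k).le (hDx k)) (mem_univ i)

theorem lt_of_mulVec_eq_smul_of_vecMul_eq_smul {A A' : Matrix n n ℝ}
    (hle : ∀ i j, A i j ≤ A' i j) (hne : A ≠ A') {x y : n → ℝ} (hx : ∀ i, 0 < x i)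
    (hy : ∀ i, 0 < y i) {r r' : ℝ} (hAx : A *ᵥ x = r • x) (hA'y : y ᵥ* A' = r' • y) :
    r < r' := by
  have hpos := dotProduct_mulVec_pos (D := A' - A) (fun i j => sub_nonneg.mpr (hle i j))
    (sub_ne_zero.mpr hne.symm) hx hy
  rw [sub_mulVec, dotProduct_sub, dotProduct_mulVec, hA'y, hAx, smul_dotProduct,
    dotProduct_smul, smul_eq_mul, smul_eq_mul, ← sub_mul] at hpos
  exact sub_pos.mp (pos_of_mul_pos_left hpos
    (dotProduct_nonneg_of_nonneg (fun i => (hy i).le) fun i => (hx i).le))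

variable [DecidableEq n] {B : Matrix n n ℝ} {x : n → ℝ}

theorem le_one_add_mulVec (hB : ∀ i j, 0 ≤ B i j) (hx : 0 ≤ x) : x ≤ (1 + B) *ᵥ x := by
  rw [add_mulVec, one_mulVec]
  exact le_add_of_nonneg_right (mulVec_nonneg_of_nonneg hB hx)

theorem pow_mulVec_nonneg (hB : ∀ i j, 0 ≤ B i j) (hx : 0 ≤ x) (k : ℕ) :
    0 ≤ (1 + B) ^ k *ᵥ x := by
  induction k with
  | zero => simpa using hx
  | succ k ih => rw [pow_succ', ← mulVec_mulVec]; exact ih.trans (le_one_add_mulVec hB ih)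

theorem posSupport_subset_one_add_mulVec (hB : ∀ i j, 0 ≤ B i j) (hx : 0 ≤ x) :
    posSupport x ⊆ posSupport ((1 + B) *ᵥ x) := fun i hi =>
  mem_posSupport.mpr ((mem_posSupport.mp hi).trans_le (le_one_add_mulVec hB hx i))

theorem IsCutIrreducible.posSupport_ssubset (hB : ∀ i j, 0 ≤ B i j)
    (hirr : B.IsCutIrreducible) (hx : 0 ≤ x) (hs : (posSupport x).Nonempty)
    (hsu : posSupport x ≠ univ) : posSupport x ⊂ posSupport ((1 + B) *ᵥ x) := by
  rw [ssubset_iff_of_subset (posSupport_subset_one_add_mulVec hB hx)]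
  -- a cut edge out of the zero set of `x` lands in its support
  obtain ⟨i, hi, j, hj, hij⟩ := hirr {i | x i ≤ 0}
    (by simpa [posSupport, eq_univ_iff_forall, filter_nonempty_iff] using hsu)
    (by simpa [posSupport, eq_univ_iff_forall, filter_nonempty_iff] using hs)
  simp only [mem_filter, mem_univ, true_and, not_le] at hi hj
  refine ⟨i, mem_posSupport.mpr ?_, fun h => hi.not_gt (mem_posSupport.mp h)⟩
  rw [add_mulVec, one_mulVec, Pi.add_apply, mulVec, dotProduct]
  have : 0 < B i j * x j := mul_pos ((hB i j).lt_of_ne' hij) hj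
  have := single_le_sum (fun k _ => mul_nonneg (hB i k) (hx k)) (mem_univ j)
  linarith [show 0 ≤ x i from hx i]

theorem IsCutIrreducible.min_le_card_posSupport_pow_mulVec (hB : ∀ i j, 0 ≤ B i j)
    (hirr : B.IsCutIrreducible) (hx : 0 ≤ x) (hs : (posSupport x).Nonempty) (k : ℕ) :
    min (k + 1) (Fintype.card n) ≤ #(posSupport ((1 + B) ^ k *ᵥ x)) := by
  induction k with
  | zero => simpa using Or.inl (card_pos.mpr hs)
  | succ k ih =>
    rw [pow_succ', ← mulVec_mulVec]
    set z := (1 + B) ^ k *ᵥ x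
    have hz : 0 ≤ z := pow_mulVec_nonneg hB hx k
    have hle : #(posSupport ((1 + B) *ᵥ z)) ≤ Fintype.card n := card_le_univ _
    by_cases hzu : posSupport z = univ
    · have : posSupport ((1 + B) *ᵥ z) = univ :=
        univ_subset_iff.mp (hzu ▸ posSupport_subset_one_add_mulVec hB hz)
      simp [this]
    · have hN : 0 < Fintype.card n := Fintype.card_pos_iff.mpr ⟨hs.choose⟩
      have hzs : (posSupport z).Nonempty := card_pos.mp (by omega)
      have := card_lt_card (hirr.posSupport_ssubset hB hz hzs hzu)
      omega

theorem IsCutIrreducible.pow_mulVec_pos (hB : ∀ i j, 0 ≤ B i j) (hirr : B.IsCutIrreducible)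
    (hx : 0 ≤ x) (hx0 : x ≠ 0) (i : n) : 0 < ((1 + B) ^ (Fintype.card n - 1) *ᵥ x) i := by
  obtain ⟨j, hj⟩ := Function.ne_iff.mp hx0
  have hs : (posSupport x).Nonempty := ⟨j, mem_posSupport.mpr ((hx j).lt_of_ne' hj)⟩
  have hN : 0 < Fintype.card n := Fintype.card_pos_iff.mpr ⟨j⟩
  have := hirr.min_le_card_posSupport_pow_mulVec hB hx hs (Fintype.card n - 1)
  have huniv := eq_univ_of_card (posSupport ((1 + B) ^ (Fintype.card n - 1) *ᵥ x))
    (le_antisymm (card_le_univ _) (by omega))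
  exact mem_posSupport.mp (huniv ▸ mem_univ i)

theorem IsCutIrreducible.exists_forall_collatzWielandt_le [Nonempty n]
    (hB : ∀ i j, 0 ≤ B i j) (hirr : B.IsCutIrreducible) : ∃ x₀ : n → ℝ, (∀ i, 0 < x₀ i) ∧
      ∀ x : n → ℝ, (∀ i, 0 < x i) → B.collatzWielandt x ≤ B.collatzWielandt x₀ := by
  set T := (1 + B) ^ (Fintype.card n - 1)
  have hT : ∀ z, 0 ≤ z → 0 ≤ T *ᵥ z := fun z hz => pow_mulVec_nonneg hB hz _
  have hTB : Commute T B := ((Commute.one_left B).add_left (Commute.refl B)).pow_left _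
  have hTΔ : ∀ y ∈ stdSimplex ℝ n, ∀ i, 0 < (T *ᵥ y) i := by
    refine fun y hy => hirr.pow_mulVec_pos hB hy.1 fun h => ?_
    simpa [h] using hy.2
  have hK : IsCompact ((T *ᵥ ·) '' stdSimplex ℝ n) :=
    (isCompact_stdSimplex ℝ n).image (continuous_const.matrix_mulVec continuous_id)
  obtain ⟨_, ⟨y₀, hy₀, rfl⟩, hmax⟩ := hK.exists_isMaxOn
    ((Set.nonempty_of_mem (single_mem_stdSimplex ℝ (Classical.arbitrary n))).image _)
    (continuousOn_collatzWielandt.mono fun _ ⟨y, hy, hxy⟩ i => hxy ▸ (hTΔ y hy i).ne')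
  refine ⟨T *ᵥ y₀, hTΔ y₀ hy₀, fun x hx => ?_⟩
  have hs : 0 < ∑ i, x i := sum_pos (fun i _ => hx i) univ_nonempty
  have hy : (∑ i, x i)⁻¹ • x ∈ stdSimplex ℝ n :=
    ⟨fun i => by simpa using (mul_pos (inv_pos.mpr hs) (hx i)).le, by
      simp [← mul_sum, inv_mul_cancel₀ hs.ne']⟩
  calc B.collatzWielandt x = B.collatzWielandt ((∑ i, x i)⁻¹ • x) :=
        (collatzWielandt_smul (inv_ne_zero hs.ne') x).symm
    _ ≤ B.collatzWielandt (T *ᵥ ((∑ i, x i)⁻¹ • x)) :=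
        collatzWielandt_le_collatzWielandt_mulVec hT hTB
          (fun i => by simpa using mul_pos (inv_pos.mpr hs) (hx i)) (hTΔ _ hy)
    _ ≤ B.collatzWielandt (T *ᵥ y₀) := hmax ⟨_, hy, rfl⟩

theorem IsCutIrreducible.exists_pos_mulVec_eq_smul_of_nonneg (hB : ∀ i j, 0 ≤ B i j)
    (hirr : B.IsCutIrreducible) : ∃ (r : ℝ) (x : n → ℝ), (∀ i, 0 < x i) ∧ B *ᵥ x = r • x := by
  cases isEmpty_or_nonempty n
  · exact ⟨0, 0, isEmptyElim, Subsingleton.elim _ _⟩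
  obtain ⟨x₀, hx₀, hmax⟩ := hirr.exists_forall_collatzWielandt_le hB
  refine ⟨B.collatzWielandt x₀, x₀, hx₀, ?_⟩
  have hle : B.collatzWielandt x₀ • x₀ ≤ B *ᵥ x₀ := (le_collatzWielandt_iff hx₀).mp le_rfl
  by_contra hne
  set T := (1 + B) ^ (Fintype.card n - 1)
  have hTB : Commute T B := ((Commute.one_left B).add_left (Commute.refl B)).pow_left _
  have hTx₀ : ∀ i, 0 < (T *ᵥ x₀) i := hirr.pow_mulVec_pos hB (fun i => (hx₀ i).le)
    fun h => (hx₀ (Classical.arbitrary n)).ne' (by simp [h])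
  -- `T` turns the nonzero defect `B x₀ - r x₀ ≥ 0` into a positive one, contradicting maximality
  have hlt : B.collatzWielandt x₀ < B.collatzWielandt (T *ᵥ x₀) := by
    rw [lt_collatzWielandt_iff hTx₀]
    intro i
    have := hirr.pow_mulVec_pos hB (sub_nonneg.mpr hle) (sub_ne_zero.mpr hne) i
    rwa [mulVec_sub, mulVec_mulVec, hTB.eq, ← mulVec_mulVec, mulVec_smul, Pi.sub_apply,
      Pi.smul_apply, smul_eq_mul, sub_pos] at this
  exact hlt.not_ge (hmax _ hTx₀)

theorem exists_nonneg_add_smul_one {A : Matrix n n ℝ}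
    (hA : ∀ i j, i ≠ j → 0 ≤ A i j) : ∃ c : ℝ, ∀ i j, 0 ≤ (A + c • 1) i j := by
  refine ⟨∑ i, |A i i|, fun i j => ?_⟩
  rcases eq_or_ne i j with rfl | hij
  · have := single_le_sum (f := fun i => |A i i|) (fun i _ => abs_nonneg _) (mem_univ i)
    simp only [add_apply, smul_apply, one_apply_eq, smul_eq_mul, mul_one]
    linarith [neg_abs_le (A i i)]
  · simpa [one_apply_ne hij] using hA i j hij

theorem IsCutIrreducible.exists_pos_mulVec_eq_smul {A : Matrix n n ℝ}
    (hA : ∀ i j, i ≠ j → 0 ≤ A i j) (hirr : A.IsCutIrreducible) :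
    ∃ (r : ℝ) (x : n → ℝ), (∀ i, 0 < x i) ∧ A *ᵥ x = r • x := by
  obtain ⟨c, hc⟩ := exists_nonneg_add_smul_one hA
  obtain ⟨r, x, hx, hrx⟩ := (hirr.of_offDiag_eq fun i j hij => by
    simp [one_apply_ne hij]).exists_pos_mulVec_eq_smul_of_nonneg hc
  refine ⟨r - c, x, hx, ?_⟩
  rw [add_mulVec, smul_mulVec, one_mulVec] at hrx
  rw [sub_smul, ← hrx, add_sub_cancel_right]

theorem isRoot_charpoly_iff_exists_mulVec_eq_smul {K : Type*} [Field K]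
    (A : Matrix n n K) (μ : K) : A.charpoly.IsRoot μ ↔ ∃ v ≠ 0, A *ᵥ v = μ • v := by
  rw [← mem_spectrum_iff_isRoot_charpoly, ← spectrum_toLin',
    ← Module.End.hasEigenvalue_iff_mem_spectrum]
  constructor
  · intro h
    obtain ⟨v, hv⟩ := h.exists_hasEigenvector
    exact ⟨v, hv.2, by simpa using hv.apply_eq_smul⟩
  · rintro ⟨v, hv, hAv⟩
    exact Module.End.hasEigenvalue_of_hasEigenvector
      ⟨by simpa [Module.End.mem_eigenspace_iff] using hAv, hv⟩

theorem re_le_of_isRoot_charpoly {A : Matrix n n ℝ} (hA : ∀ i j, i ≠ j → 0 ≤ A i j)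
    {x : n → ℝ} (hx : ∀ i, 0 < x i) {r : ℝ} (hAx : A *ᵥ x = r • x) {μ : ℂ}
    (hμ : (A.map (↑)).charpoly.IsRoot μ) : μ.re ≤ r := by
  obtain ⟨v, hv, hAv⟩ := (isRoot_charpoly_iff_exists_mulVec_eq_smul _ μ).mp hμ
  obtain ⟨c, hc⟩ := exists_nonneg_add_smul_one hA
  -- shifting by `c` makes `A` nonnegative without moving eigenvectors
  have hBx : (A + c • 1) *ᵥ x = (r + c) • x := by
    rw [add_mulVec, smul_mulVec, one_mulVec, hAx, add_smul]
  have hBv : (A + c • 1).map (↑) *ᵥ v = (μ + c) • v := by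
    rw [Matrix.map_add _ Complex.ofReal_add, add_mulVec, hAv, add_smul]
    simp [Matrix.map_smul, smul_mulVec]
  have := norm_le_of_mulVec_eq_smul hc hx hBx hv hBv
  have := Complex.re_le_norm (μ + c)
  simp only [Complex.add_re, Complex.ofReal_re] at this
  linarith

end Matrix

theorem spectralBound_transpose {m : ℕ} (A : Matrix (Fin m) (Fin m) ℝ) :
    spectralBound Aᵀ = spectralBound A := by
  simp only [spectralBound, transpose_map, charpoly_transpose]

theorem spectralBound_eq_of_mulVec_eq_smul {m : ℕ} [NeZero m] {A : Matrix (Fin m) (Fin m) ℝ}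
    (hA : ∀ i j, i ≠ j → 0 ≤ A i j) {x : Fin m → ℝ} (hx : ∀ i, 0 < x i) {r : ℝ}
    (hAx : A *ᵥ x = r • x) : spectralBound A = r := by
  refine IsGreatest.csSup_eq ⟨⟨r, ?_, rfl⟩, ?_⟩
  · refine (isRoot_charpoly_iff_exists_mulVec_eq_smul _ _).mpr
      ⟨fun i => x i, fun h => (hx 0).ne' (by simpa using congrFun h 0), ?_⟩
    ext i
    simpa [mulVec, dotProduct] using congrArg Complex.ofReal (congrFun hAx i)
  · rintro _ ⟨μ, hμ, rfl⟩
    exact re_le_of_isRoot_charpoly hA hx hAx hμ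

/-- Let `P`, `Q` be `m×m` real matrices with `−P` cooperative
(nonnegative off-diagonal entries), `Q` nonnegative and nonzero, and
`−P + aQ` irreducible for every `a > 0`.  Then `a ↦ δ̂(−P + aQ)` is strictly
increasing on `(0,∞)`: for `0 < a₂ < a₁`,
`δ̂(−P + a₂Q) < δ̂(−P + a₁Q)`. -/
theorem stmt8 {m : ℕ} (hm : 1 ≤ m) (P Q : Matrix (Fin m) (Fin m) ℝ)
    (hP : ∀ i j : Fin m, i ≠ j → 0 ≤ (-P) i j)
    (hQ : ∀ i j : Fin m, 0 ≤ Q i j) (hQ0 : Q ≠ 0)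
    (hirr : ∀ a : ℝ, 0 < a → ∀ s : Finset (Fin m), s.Nonempty → s ≠ Finset.univ →
      ∃ i ∈ s, ∃ j, j ∉ s ∧ (-P + a • Q) i j ≠ 0) :
    ∀ a₁ a₂ : ℝ, 0 < a₂ → a₂ < a₁ →
      spectralBound (-P + a₂ • Q) < spectralBound (-P + a₁ • Q) := by
  intro a₁ a₂ ha₂ ha
  have ha₁ : 0 < a₁ := ha₂.trans ha
  have : NeZero m := ⟨by omega⟩
  have hirr : ∀ a : ℝ, 0 < a → (-P + a • Q).IsCutIrreducible := hirr
  have hcoop : ∀ a : ℝ, 0 < a → ∀ i j, i ≠ j → 0 ≤ (-P + a • Q) i j := fun a ha i j hij => by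
    simpa using add_nonneg (hP i j hij) (mul_nonneg ha.le (hQ i j))
  have hcoop₁ : ∀ i j, i ≠ j → 0 ≤ (-P + a₁ • Q)ᵀ i j := fun i j hij =>
    hcoop a₁ ha₁ j i hij.symm
  obtain ⟨r₂, x, hx, hx₂⟩ := (hirr a₂ ha₂).exists_pos_mulVec_eq_smul (hcoop a₂ ha₂)
  obtain ⟨r₁, y, hy, hy₁⟩ := (hirr a₁ ha₁).transpose.exists_pos_mulVec_eq_smul hcoop₁
  rw [spectralBound_eq_of_mulVec_eq_smul (hcoop a₂ ha₂) hx hx₂, ← spectralBound_transpose,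
    spectralBound_eq_of_mulVec_eq_smul hcoop₁ hy hy₁]
  rw [mulVec_transpose] at hy₁
  refine lt_of_mulVec_eq_smul_of_vecMul_eq_smul (fun i j => ?_) (fun h => hQ0 ?_) hx hy hx₂ hy₁
  · simpa using mul_le_mul_of_nonneg_right ha.le (hQ i j)
  · rw [add_right_inj, ← sub_eq_zero, ← sub_smul, smul_eq_zero] at h
    exact h.resolve_left (sub_ne_zero.mpr ha.ne)
end
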